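/- Let λ = γ = (1+√5)/2 and T(x,y) = (y, {y/γ − x}) on [0,1)². Let 𝓡 = {(x,y) ∈ [0,1)² : y < γx, x + y > 1, x < γy} ∪ {(0,0)}. Then T⁵(z) = z for every z ∈ 𝓡; moreover the points (0,0) and (γ²/(γ²+1), γ²/(γ²+1)) are fixed points of T, and every other point z ∈ 𝓡 has minimal period exactly 5 (i.e., T(z) ≠ z). -/

import Mathlib

noncomputable def gamma : ℝ := (1 + Real.sqrt 5) / 2

/-- The map T(x,y) = (y, {y/γ - x}) for λ = γ. -/
noncomputable def T : ℝ × ℝ → ℝ × ℝ := fun z => (z.2, Int.fract (z.2 / gamma - z.1))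

/-- The set 𝓡. -/
noncomputable def Rcal : Set (ℝ × ℝ) :=
  {z : ℝ × ℝ | z.1 ∈ Set.Ico (0 : ℝ) 1 ∧ z.2 ∈ Set.Ico (0 : ℝ) 1 ∧
    z.2 < gamma * z.1 ∧ 1 < z.1 + z.2 ∧ z.1 < gamma * z.2} ∪ {(0, 0)}

/-- The second fixed point γ²/(γ²+1). -/
noncomputable def c : ℝ := gamma ^ 2 / (gamma ^ 2 + 1)

/-!
On the pentagon `P` cut out by `x < 1`, `y < 1`, `y < γx`, `x + y > 1`, `x < γy`, the argument
of the fractional part in `T` lies in `[-1, 0)`, so `T` agrees there with the affine map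
`A(x, y) = (y, y/γ - x + 1)`, which permutes the five defining inequalities of `P` cyclically.
The linear part of `A` has characteristic polynomial `t² - t/γ + 1`, whose roots are primitive
fifth roots of unity because `2 cos(2π/5) = 1/γ`; hence `A⁵ = id`. The only fixed point of `A` is
`(c, c)` with `c = 1/(3 - γ) = γ²/(γ² + 1)`, and `𝓡 = P ∪ {(0, 0)}`.
-/

open Function Set Real

lemma Set.EqOn.iterate_of_mapsTo {α : Type*} {f g : α → α} {s : Set α} (hfg : EqOn f g s)
    (hg : MapsTo g s s) (n : ℕ) : EqOn f^[n] g^[n] s := by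
  induction n with
  | zero => exact eqOn_refl _ _
  | succ n ih =>
    intro z hz
    rw [iterate_succ_apply, iterate_succ_apply, hfg hz, ih (hg hz)]

lemma gamma_eq_goldenRatio : gamma = goldenRatio := rfl

lemma div_gamma (t : ℝ) : t / gamma = (gamma - 1) * t := by
  rw [div_eq_inv_mul, gamma_eq_goldenRatio, inv_goldenRatio, ← one_sub_goldenConj, neg_sub]

lemma one_lt_gamma : 1 < gamma := one_lt_goldenRatio

lemma gamma_lt_two : gamma < 2 := goldenRatio_lt_two

lemma gamma_sq : gamma ^ 2 = gamma + 1 := goldenRatio_sq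

lemma gamma_sub_one_mul_lt {x y : ℝ} (h : y < gamma * x) : (gamma - 1) * y < x := by
  calc (gamma - 1) * y < (gamma - 1) * (gamma * x) :=
        mul_lt_mul_of_pos_left h (sub_pos.2 one_lt_gamma)
    _ = x := by linear_combination x * gamma_sq

lemma c_mul_three_sub_gamma : c * (3 - gamma) = 1 := by
  have : gamma ^ 2 + 1 ≠ 0 := by positivity
  rw [c]
  field_simp
  linear_combination (1 - gamma) * gamma_sq

def pentagon : Set (ℝ × ℝ) :=
  {z | z.1 < 1 ∧ z.2 < 1 ∧ z.2 < gamma * z.1 ∧ 1 < z.1 + z.2 ∧ z.1 < gamma * z.2}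

noncomputable def affineT (z : ℝ × ℝ) : ℝ × ℝ := (z.2, (gamma - 1) * z.2 - z.1 + 1)

lemma Rcal_subset : Rcal ⊆ insert (0, 0) pentagon := by
  rintro z (⟨⟨-, hx⟩, ⟨-, hy⟩, h⟩ | rfl)
  · exact Or.inr ⟨hx, hy, h⟩
  · exact Or.inl rfl

lemma eqOn_T_affineT : EqOn T affineT pentagon := by
  rintro ⟨x, y⟩ ⟨hx, -, hyx, hxy, hxy'⟩
  dsimp only at hx hyx hxy hxy'
  have lower : -1 ≤ (gamma - 1) * y - x := by nlinarith [one_lt_gamma]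
  have upper : (gamma - 1) * y - x < 0 := by linarith [gamma_sub_one_mul_lt hyx]
  have hfract : Int.fract ((gamma - 1) * y - x) = (gamma - 1) * y - x + 1 := by
    rw [← Int.fract_add_one, Int.fract_eq_self.mpr ⟨by linarith, by linarith⟩]
  simp only [T, affineT, div_gamma, hfract]

lemma mapsTo_affineT_pentagon : MapsTo affineT pentagon pentagon := by
  rintro ⟨x, y⟩ ⟨hx, hy, hyx, hxy, hxy'⟩
  dsimp only at hx hy hyx hxy hxy'
  have expand : gamma * ((gamma - 1) * y - x + 1) = y + gamma * (1 - x) := by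
    linear_combination y * gamma_sq
  refine ⟨hy, ?_, ?_, ?_, ?_⟩ <;> simp only [affineT]
  · linarith [gamma_sub_one_mul_lt hyx]
  · linarith
  · linarith
  · nlinarith [one_lt_gamma]

lemma affineT_iterate_five (z : ℝ × ℝ) : affineT^[5] z = z := by
  obtain ⟨x, y⟩ := z
  simp only [iterate_succ, iterate_zero, comp_apply, id_eq, affineT, Prod.mk.injEq]
  constructor
  · linear_combination (gamma ^ 2 * y + gamma * (1 - x - 3 * y) + (y + 2 * x - 1)) * gamma_sq
  · linear_combination (gamma ^ 3 * y + gamma ^ 2 * (1 - x - 4 * y) +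
      gamma * (3 * y + 3 * x - 2) + (y - x)) * gamma_sq

lemma affineT_eq_self_iff {z : ℝ × ℝ} : affineT z = z ↔ z = (c, c) := by
  obtain ⟨x, y⟩ := z
  simp only [affineT, Prod.mk.injEq]
  constructor
  · rintro ⟨rfl, h⟩
    have hy : y = c := by
      refine mul_right_cancel₀ (b := 3 - gamma) (by linarith [gamma_lt_two]) ?_
      linear_combination -h - c_mul_three_sub_gamma
    exact ⟨hy, hy⟩
  · rintro ⟨rfl, rfl⟩
    exact ⟨rfl, by linear_combination -c_mul_three_sub_gamma⟩

lemma c_mem_pentagon : (c, c) ∈ pentagon := by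
  have hc := c_mul_three_sub_gamma
  have hg := one_lt_gamma
  refine ⟨?_, ?_, ?_, ?_, ?_⟩ <;> dsimp only <;> nlinarith [gamma_lt_two]

/-- T⁵ = id on 𝓡, (0,0) and (c,c) are fixed points, and every other
point of 𝓡 has minimal period exactly 5, i.e. T z ≠ z. -/
theorem stmt_1 :
    (∀ z ∈ Rcal, T^[5] z = z) ∧
    T (0, 0) = (0, 0) ∧ T (c, c) = (c, c) ∧
    (∀ z ∈ Rcal, z ≠ (0, 0) → z ≠ (c, c) → T z ≠ z) := by
  have T_zero : T (0, 0) = (0, 0) := by simp [T]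
  refine ⟨fun z hz => ?_, T_zero, ?_, fun z hz hz0 hzc hTz => hzc ?_⟩
  · rcases Rcal_subset hz with rfl | hz
    · exact iterate_fixed T_zero 5
    · rw [eqOn_T_affineT.iterate_of_mapsTo mapsTo_affineT_pentagon 5 hz, affineT_iterate_five]
  · rw [eqOn_T_affineT c_mem_pentagon, affineT_eq_self_iff]
  · have hz : z ∈ pentagon := (Rcal_subset hz).resolve_left hz0
    rwa [← affineT_eq_self_iff, ← eqOn_T_affineT hz]
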